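/- Let R be an SDT ring such that 3 is a unit of R. Then for every a ∈ R there exist f, b ∈ R with a = f + b, f² = f, b ∈ Δ(R), and fb = bf; that is, R is an SDI ring. -/
import Mathlib


/-- `Δ(R) = {x ∈ R : x + u ∈ U(R) for every u ∈ U(R)}`. -/
def Delta (R : Type*) [Ring R] : Set R :=
  {x : R | ∀ u : R, IsUnit u → IsUnit (x + u)}

/-- A ring `R` is a strongly Δ tripotent (SDT) ring if every `a ∈ R` can be written
`a = e + d` with `e³ = e`, `d ∈ Δ(R)` and `ed = de`. -/
def IsSDTRing (R : Type*) [Ring R] : Prop :=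
  ∀ a : R, ∃ e d : R, e ^ 3 = e ∧ d ∈ Delta R ∧ e * d = d * e ∧ a = e + d

/-- A ring `R` is an SDI ring if every `a ∈ R` can be written `a = e + d`
with `e² = e`, `d ∈ Δ(R)` and `ed = de`. -/
def IsSDIRing (R : Type*) [Ring R] : Prop :=
  ∀ a : R, ∃ e d : R, e * e = e ∧ d ∈ Delta R ∧ e * d = d * e ∧ a = e + d

section AuxDelta

variable {R : Type*} [Ring R] {x y u : R}

lemma delta_add' (hx : x ∈ Delta R) (hy : y ∈ Delta R) : x + y ∈ Delta R := by
  intro u hu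
  have h := hx (y + u) (hy u hu)
  rwa [← add_assoc] at h

lemma delta_neg' (hx : x ∈ Delta R) : -x ∈ Delta R := by
  intro u hu
  have h := (hx (-u) hu.neg).neg
  have : -(x + -u) = -x + u := by abel
  rwa [this] at h

lemma delta_unit_mul' (hu : IsUnit u) (hx : x ∈ Delta R) : u * x ∈ Delta R := by
  obtain ⟨U, rfl⟩ := hu
  intro v hv
  have h := (U.isUnit).mul (hx ((↑U⁻¹ : R) * v) ((U⁻¹.isUnit).mul hv))
  have heq : (U : R) * (x + (↑U⁻¹ : R) * v) = (U : R) * x + v := by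
    rw [mul_add, ← mul_assoc, Units.mul_inv, one_mul]
  rwa [heq] at h

lemma delta_mul_unit' (hx : x ∈ Delta R) (hu : IsUnit u) : x * u ∈ Delta R := by
  obtain ⟨U, rfl⟩ := hu
  intro v hv
  have h := (hx (v * (↑U⁻¹ : R)) (hv.mul U⁻¹.isUnit)).mul U.isUnit
  have heq : (x + v * (↑U⁻¹ : R)) * (U : R) = x * (U : R) + v := by
    rw [add_mul, mul_assoc, Units.inv_mul, mul_one]
  rwa [heq] at h

lemma delta_mul' (hx : x ∈ Delta R) (hy : y ∈ Delta R) : x * y ∈ Delta R := by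
  have h1 : IsUnit (y + 1) := hy 1 isUnit_one
  have h2 : x * (y + 1) ∈ Delta R := delta_mul_unit' hx h1
  have h3 : x * (y + 1) + -x ∈ Delta R := delta_add' h2 (delta_neg' hx)
  have heq : x * (y + 1) + -x = x * y := by noncomm_ring
  rwa [heq] at h3

/-- Key lemma: in an SDT ring with `3` a unit, `e - e²` is in `Δ(R)`
for every tripotent `e`. -/
lemma tripotent_sub_sq_mem_delta {R : Type*} [Ring R] (hR : IsSDTRing R)
    (h3 : IsUnit (3 : R)) {e : R} (he : e ^ 3 = e) : e - e ^ 2 ∈ Delta R := by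
  obtain ⟨g, c, hg, hc, hgc, hd⟩ := hR (e - e ^ 2)
  have ht2 : (g + c) * (g + c) + ((g + c) + (g + c)) = 0 := by
    rw [← hd]
    linear_combination (norm := noncomm_ring) (e - 2) * he
  -- u₁ and u₂ are involutive units
  have hu1 : (g + 1 - g ^ 2) * (g + 1 - g ^ 2) = 1 := by
    linear_combination (norm := noncomm_ring) (g - 2) * hg
  have hu2 : (g + g ^ 2 - 1) * (g + g ^ 2 - 1) = 1 := by
    linear_combination (norm := noncomm_ring) (g + 2) * hg
  have hU1 : IsUnit (g + 1 - g ^ 2) := ⟨⟨_, _, hu1, hu1⟩, rfl⟩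
  have hU2 : IsUnit (g + g ^ 2 - 1) := ⟨⟨_, _, hu2, hu2⟩, rfl⟩
  have hA : g ^ 2 + (g + g)
      = -(((g + 1 - g ^ 2) * c + (g + g ^ 2 - 1) * c) + (c * c + (c + c))) := by
    linear_combination (norm := noncomm_ring) ht2 + hgc
  have hA_mem : g ^ 2 + (g + g) ∈ Delta R := by
    rw [hA]
    exact delta_neg' (delta_add'
      (delta_add' (delta_unit_mul' hU1 hc) (delta_unit_mul' hU2 hc))
      (delta_add' (delta_mul' hc hc) (delta_add' hc hc)))
  have hB : (g ^ 2 + (g + g)) * (g + 1 - g ^ 2) = g + (g ^ 2 + g ^ 2) := by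
    linear_combination (norm := noncomm_ring) (-g - 1) * hg
  have hB_mem : g + (g ^ 2 + g ^ 2) ∈ Delta R := by
    rw [← hB]; exact delta_mul_unit' hA_mem hU1
  have h3g : (3 : R) * g ^ 2
      = (g + (g ^ 2 + g ^ 2)) + (g + (g ^ 2 + g ^ 2)) + -(g ^ 2 + (g + g)) := by
    rw [show (3 : R) = 1 + 1 + 1 by norm_num]
    noncomm_ring
  have h3g_mem : (3 : R) * g ^ 2 ∈ Delta R := by
    rw [h3g]
    exact delta_add' (delta_add' hB_mem hB_mem) (delta_neg' hA_mem)
  obtain ⟨v, hv⟩ := h3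
  have hg2_mem : g ^ 2 ∈ Delta R := by
    have h := delta_unit_mul' (v⁻¹.isUnit) h3g_mem
    have heq : (↑v⁻¹ : R) * ((3 : R) * g ^ 2) = g ^ 2 := by
      rw [← hv, ← mul_assoc, Units.inv_mul, one_mul]
    rwa [heq] at h
  have hg_mem : g ∈ Delta R := by
    have heq : g = (g + (g ^ 2 + g ^ 2)) + (-(g ^ 2) + -(g ^ 2)) := by noncomm_ring
    rw [heq]
    exact delta_add' hB_mem (delta_add' (delta_neg' hg2_mem) (delta_neg' hg2_mem))
  rw [hd]
  exact delta_add' hg_mem hc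

end AuxDelta

theorem isSDI_of_isSDT_three_unit {R : Type*} [Ring R] (hR : IsSDTRing R)
    (h3 : IsUnit (3 : R)) : IsSDIRing R := by
  intro a
  obtain ⟨e, d, he, hd, hed, ha⟩ := hR a
  refine ⟨e ^ 2, (e - e ^ 2) + d, ?_, ?_, ?_, ?_⟩
  · linear_combination (norm := noncomm_ring) e * he
  · exact delta_add' (tripotent_sub_sq_mem_delta hR h3 he) hd
  · linear_combination (norm := noncomm_ring) e * hed + hed * e
  · linear_combination (norm := noncomm_ring) ha
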